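/- For every compact metric space K and every Abelian group G, the cohomological dimension satisfies dim_G K ≤ dim K. -/

import Mathlib

/-!
A nonzero class of degree `q + 1` in `Ȟ(K, A; G)` is represented by a relative cocycle on the
nerve of some open cover `α` that stays nontrivial on every refinement. If a refinement `β` had
order at most `q`, every relative `(q + 1)`-cocycle on its ordered nerve would be a relative
coboundary: after fixing a linear order on the vertices, coning gives a chain homotopy, on ordered
chains, between the identity and the projection `sortProj` onto strictly increasing tuples. Both
maps send a tuple to chains on its own vertices, so they respect the nerve and the subcomplex of
`A`, and `sortProj` vanishes in degree `q + 1` because no `q + 2` distinct members of `β` meet.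
Hence `q + 1 ≤ D(α) ≤ dim K`.
-/

open Filter Set
open scoped ENNReal

namespace MeanDimPaper

variable {X : Type*} [TopologicalSpace X]

/-- `α` is an open cover of `X`. -/
def IsOpenCover (α : Set (Set X)) : Prop :=
  (∀ U ∈ α, IsOpen U) ∧ ⋃₀ α = Set.univ

/-- The order of a cover `α`: the maximum `n ≥ 0` such that there exist `n + 1`
pairwise distinct members of `α` with nonempty common intersection. -/
noncomputable def ord (α : Set (Set X)) : ℕ∞ :=
  ⨆ n ∈ {n : ℕ | ∃ f : Fin (n + 1) → Set X,
      Function.Injective f ∧ (∀ i, f i ∈ α) ∧ (⋂ i, f i).Nonempty}, (n : ℕ∞)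

/-- `β` refines `α`: every member of `β` is contained in some member of `α`. -/
def Refines (β α : Set (Set X)) : Prop := ∀ V ∈ β, ∃ U ∈ α, V ⊆ U

/-- `D(α)`: the minimum of `ord β` over open covers `β` refining `α`. -/
noncomputable def covD (α : Set (Set X)) : ℕ∞ :=
  ⨅ β ∈ {β : Set (Set X) | IsOpenCover β ∧ Refines β α}, ord β

/-- Topological (covering) dimension: the supremum of `D(α)` over open covers `α`. -/
noncomputable def topDim (X : Type*) [TopologicalSpace X] : ℕ∞ :=
  ⨆ α ∈ {α : Set (Set X) | IsOpenCover α}, covD α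

/-- Diameter of a set with respect to a distance function `d`. -/
noncomputable def diamD (d : X → X → ℝ) (U : Set X) : ℝ :=
  sSup {r | ∃ x ∈ U, ∃ y ∈ U, r = d x y}

/-- Mesh of a cover: the supremum of the diameters of its members. -/
noncomputable def mesh (d : X → X → ℝ) (α : Set (Set X)) : ℝ :=
  sSup (diamD d '' α)

/-- `widim_ε(X, d)`: the minimum of `D(α)` over open covers `α` with `mesh(α, d) < ε`. -/
noncomputable def widim (ε : ℝ) (d : X → X → ℝ) : ℕ∞ :=
  ⨅ α ∈ {α : Set (Set X) | IsOpenCover α ∧ mesh d α < ε}, covD α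

/-- `d` is a metric on `X` compatible with the topology of `X`. -/
structure IsCompatMetric {X : Type*} [TopologicalSpace X] (d : X → X → ℝ) : Prop where
  refl : ∀ x, d x x = 0
  eq_of : ∀ x y, d x y = 0 → x = y
  symm : ∀ x y, d x y = d y x
  triangle : ∀ x y z, d x z ≤ d x y + d y z
  isOpen_iff : ∀ U : Set X, IsOpen U ↔ ∀ x ∈ U, ∃ ε > 0, ∀ y, d x y < ε → y ∈ U

/-- The dynamical distance `d_n(x, y) = max_{0 ≤ i < n} d(Tⁱ x, Tⁱ y)`. -/
noncomputable def dynDist (d : X → X → ℝ) (T : X → X) (n : ℕ) (x y : X) : ℝ :=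
  sSup {r | ∃ i < n, r = d (T^[i] x) (T^[i] y)}

/-- Mean dimension `mdim(X, T)` computed with the metric `d`:
`lim_{ε → 0} lim_{n → ∞} widim_ε(X, d_n) / n`.  The inner limit exists (by
subadditivity of `n ↦ widim_ε(X, d_n)`) so it coincides with the liminf, and the inner
quantity is monotone as `ε` decreases, so the limit as `ε → 0` is the supremum over
`ε > 0`. -/
noncomputable def mdim (T : X → X) (d : X → X → ℝ) : ℝ≥0∞ :=
  ⨆ (ε : ℝ) (_ : 0 < ε),
    Filter.liminf (fun n : ℕ => (widim ε (dynDist d T n) : ℝ≥0∞) / (n : ℝ≥0∞)) Filter.atTop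

/-- The full shift `σ` on the alphabet `K`: `σ((xₙ)ₙ) = (xₙ₊₁)ₙ`. -/
def shift (K : Type*) : (ℤ → K) → ℤ → K := fun x n => x (n + 1)

variable {K : Type*} [TopologicalSpace K]

/-- An ordered `q`-simplex of the nerve complex `N(α)`: a `(q+1)`-tuple of members of `α`
with nonempty common intersection. -/
def IsNerveSimplex (α : Set (Set K)) {q : ℕ} (f : Fin (q + 1) → Set K) : Prop :=
  (∀ i, f i ∈ α) ∧ (⋂ i, f i).Nonempty

/-- The type of ordered `q`-simplices of the nerve `N(α)`. -/
def NerveSimplex (α : Set (Set K)) (q : ℕ) : Type _ :=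
  {f : Fin (q + 1) → Set K // IsNerveSimplex α f}

/-- The `i`-th face of a `(q+1)`-simplex of the nerve. -/
def face {α : Set (Set K)} {q : ℕ} (g : NerveSimplex α (q + 1)) (i : Fin (q + 2)) :
    NerveSimplex α q :=
  ⟨g.1 ∘ i.succAbove, ⟨fun j => g.2.1 _, by
    obtain ⟨x, hx⟩ := g.2.2
    exact ⟨x, Set.mem_iInter.2 fun j => Set.mem_iInter.1 hx _⟩⟩⟩

/-- A simplex of `N(α)` belongs to the subcomplex `N(α|_A)` iff the common intersection
of its members meets `A`. -/
def InSubNerve (A : Set K) {α : Set (Set K)} {q : ℕ} (f : NerveSimplex α q) : Prop :=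
  ((⋂ i, f.1 i) ∩ A).Nonempty

/-- A relative cochain of the pair `(N(α), N(α|_A))`: a `G`-valued simplicial cochain on
`N(α)` vanishing on the subcomplex `N(α|_A)`. -/
def IsRelCochain (A : Set K) {α : Set (Set K)} {q : ℕ} {G : Type*} [AddCommGroup G]
    (c : NerveSimplex α q → G) : Prop :=
  ∀ f, InSubNerve A f → c f = 0

/-- The simplicial coboundary operator. -/
def cob {α : Set (Set K)} {q : ℕ} {G : Type*} [AddCommGroup G]
    (c : NerveSimplex α q → G) (g : NerveSimplex α (q + 1)) : G :=
  ∑ i : Fin (q + 2), (-1 : ℤ) ^ (i : ℕ) • c (face g i)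

/-- A relative `q`-cocycle of the pair `(N(α), N(α|_A))` with coefficients in `G`. -/
def IsRelCocycle (A : Set K) {α : Set (Set K)} {q : ℕ} {G : Type*} [AddCommGroup G]
    (c : NerveSimplex α q → G) : Prop :=
  IsRelCochain A c ∧ ∀ g : NerveSimplex α (q + 1), cob c g = 0

/-- A relative `q`-coboundary of the pair `(N(α), N(α|_A))` with coefficients in `G`. -/
def IsRelCoboundary (A : Set K) {α : Set (Set K)} {G : Type*} [AddCommGroup G] :
    (q : ℕ) → (NerveSimplex α q → G) → Prop
  | 0, c => ∀ f, c f = 0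
  | _ + 1, c => ∃ b, IsRelCochain A b ∧ ∀ g, cob b g = c g

/-- The simplicial map `N(β) → N(α)` induced by a choice `r` assigning to each member of
the refinement `β` a member of `α` containing it. -/
def simplexMap {α β : Set (Set K)} (r : Set K → Set K)
    (hr : ∀ V ∈ β, V ⊆ r V ∧ r V ∈ α) {q : ℕ} (g : NerveSimplex β q) :
    NerveSimplex α q :=
  ⟨fun i => r (g.1 i), ⟨fun i => (hr _ (g.2.1 i)).2, by
    obtain ⟨x, hx⟩ := g.2.2
    exact ⟨x, Set.mem_iInter.2 fun i => (hr _ (g.2.1 i)).1 (Set.mem_iInter.1 hx i)⟩⟩⟩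

/-- "The natural map `H^q(N(α), N(α|_A); G) → Ȟ^q(K, A; G)` is nonzero."
Since the Čech cohomology `Ȟ^q(K, A; G)` is the directed colimit of the cohomologies of
the nerve pairs over refinement, this map is nonzero iff some relative `q`-cocycle `c`
on `(N(α), N(α|_A))` has the property that, for every open cover `β` refining `α`, the
pullback of `c` along any choice of induced simplicial map `N(β) → N(α)` is not a
relative coboundary (all such choices induce the same map on cohomology). -/
def NerveToCechNonzero (α : Set (Set K)) (A : Set K) (G : Type*) [AddCommGroup G]
    (q : ℕ) : Prop :=
  ∃ c : NerveSimplex α q → G, IsRelCocycle A c ∧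
    ∀ β : Set (Set K), IsOpenCover β → Refines β α →
      ∀ (r : Set K → Set K) (hr : ∀ V ∈ β, V ⊆ r V ∧ r V ∈ α),
        ¬ IsRelCoboundary A q (fun g : NerveSimplex β q => c (simplexMap r hr g))

/-- Cohomological dimension `dim_G K`: the supremum of all `q ≥ 0` such that
`Ȟ^q(K, A; G) ≠ 0` for some closed subset `A ⊆ K`.  An element of the colimit
`Ȟ^q(K, A; G)` is nonzero iff it is represented at some stage `α` by a cocycle class
with nonzero image in the colimit. -/
noncomputable def cohomDim (G : Type*) [AddCommGroup G] (K : Type*) [TopologicalSpace K] :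
    ℕ∞ :=
  ⨆ q ∈ {q : ℕ | ∃ A : Set K, IsClosed A ∧
      ∃ α : Set (Set K), IsOpenCover α ∧ NerveToCechNonzero α A G q}, (q : ℕ∞)

end MeanDimPaper

namespace Finsupp

variable {α R M : Type*} [Semiring R] [AddCommMonoid M] [Module R M] {s : Set α}

theorem supported_le_comap_of_single {F : (α →₀ R) →ₗ[R] M} {p : Submodule R M}
    (h : ∀ a ∈ s, F (single a 1) ∈ p) : supported R R s ≤ p.comap F := by
  rw [supported_eq_span_single, Submodule.span_le]
  rintro _ ⟨a, ha, rfl⟩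
  exact h a ha

theorem eq_of_mem_supported_of_single {F G : (α →₀ R) →ₗ[R] M}
    (h : ∀ a ∈ s, F (single a 1) = G (single a 1)) {x : α →₀ R}
    (hx : x ∈ supported R R s) :
    F x = G x := by
  rw [supported_eq_span_single] at hx
  exact LinearMap.eqOn_span' (by rintro _ ⟨a, ha, rfl⟩; exact h a ha) hx

end Finsupp

theorem Fin.cons_comp_succAbove_zero {V : Type*} {n : ℕ} (v : V) (f : Fin (n + 1) → V) :
    (Fin.cons v f : Fin (n + 2) → V) ∘ (0 : Fin (n + 2)).succAbove = f := by
  funext j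
  simp

theorem Fin.cons_comp_succAbove_succ {V : Type*} {n : ℕ} (v : V) (f : Fin (n + 1) → V)
    (i : Fin (n + 1)) :
    (Fin.cons v f : Fin (n + 2) → V) ∘ i.succ.succAbove = Fin.cons v (f ∘ i.succAbove) := by
  funext j
  cases j using Fin.cases <;> simp [Fin.succ_succAbove_succ]

open Finsupp

abbrev OrderedChain (V : Type*) (n : ℕ) := (Fin (n + 1) → V) →₀ ℤ

namespace OrderedChain

variable {V : Type*} {S T : Set V} {v : V} {n : ℕ}

noncomputable def boundary : OrderedChain V (n + 1) →ₗ[ℤ] OrderedChain V n :=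
  linearCombination ℤ fun f =>
    ∑ i : Fin (n + 2), (-1 : ℤ) ^ (i : ℕ) • single (f ∘ i.succAbove) 1

theorem boundary_single (f : Fin (n + 2) → V) :
    boundary (single f 1) =
      ∑ i : Fin (n + 2), (-1 : ℤ) ^ (i : ℕ) • single (f ∘ i.succAbove) 1 := by
  simp [boundary]

theorem boundary_comp_boundary :
    boundary ∘ₗ (boundary : OrderedChain V (n + 2) →ₗ[ℤ] OrderedChain V (n + 1)) = 0 := by
  refine lhom_ext' fun f => LinearMap.ext_ring ?_
  simp only [LinearMap.comp_apply, lsingle_apply, boundary_single, map_sum, map_zsmul,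
    Finset.smul_sum, smul_smul, ← pow_add, Function.comp_assoc, LinearMap.zero_apply]
  rw [← Finset.sum_product']
  -- the faces `f ∘ i.succAbove ∘ j.succAbove` cancel in pairs, swapping the roles of `i`, `j`
  refine Finset.sum_involution (fun p _ => (p.1.succAbove p.2, p.2.predAbove p.1)) ?_ ?_ ?_ ?_
  · rintro ⟨i, j⟩ -
    have hface : (i.succAbove j).succAbove ∘ (j.predAbove i).succAbove =
        i.succAbove ∘ j.succAbove :=
      funext (Fin.succAbove_succAbove_succAbove_predAbove i j)
    dsimp only
    rw [Fin.neg_one_pow_succAbove_add_predAbove, hface, neg_smul, add_neg_cancel]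
  · rintro ⟨i, j⟩ - - h
    exact Fin.succAbove_ne i j (congrArg Prod.fst h)
  · simp
  · rintro ⟨i, j⟩ -
    simp [Fin.succAbove_succAbove_predAbove, Fin.predAbove_predAbove_succAbove]

theorem boundary_boundary (x : OrderedChain V (n + 2)) : boundary (boundary x) = 0 :=
  LinearMap.congr_fun boundary_comp_boundary x

noncomputable def cone (v : V) : OrderedChain V n →ₗ[ℤ] OrderedChain V (n + 1) :=
  lmapDomain ℤ ℤ fun f : Fin (n + 1) → V => (Fin.cons v f : Fin (n + 2) → V)

theorem cone_single (v : V) (f : Fin (n + 1) → V) :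
    cone v (single f 1) = single (Fin.cons v f) 1 := by
  simp [cone]

theorem boundary_cone_single (v : V) (f : Fin (n + 2) → V) :
    boundary (cone v (single f 1)) = single f 1 - cone v (boundary (single f 1)) := by
  rw [cone_single, boundary_single, Fin.sum_univ_succ, boundary_single, map_sum]
  simp only [Fin.cons_comp_succAbove_zero, Fin.cons_comp_succAbove_succ, Fin.val_zero, pow_zero,
    one_smul, Fin.val_succ, pow_succ, mul_neg_one, neg_smul, Finset.sum_neg_distrib, map_zsmul,
    cone_single, sub_eq_add_neg]

theorem boundary_cone (v : V) (x : OrderedChain V (n + 1)) :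
    boundary (cone v x) = x - cone v (boundary x) := by
  have : boundary ∘ₗ cone v =
      LinearMap.id - cone v ∘ₗ (boundary : OrderedChain V (n + 1) →ₗ[ℤ] _) :=
    lhom_ext' fun f => LinearMap.ext_ring (boundary_cone_single v f)
  exact LinearMap.congr_fun this x

def chainsOn (S : Set V) (n : ℕ) : Submodule ℤ (OrderedChain V n) :=
  supported ℤ ℤ {f | range f ⊆ S}

theorem single_mem_chainsOn {f : Fin (n + 1) → V} (hf : range f ⊆ S) :
    single f 1 ∈ chainsOn S n :=
  single_mem_supported ℤ 1 hf

theorem boundary_mem_chainsOn {x : OrderedChain V (n + 1)} (hx : x ∈ chainsOn S (n + 1)) :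
    boundary x ∈ chainsOn S n := by
  refine supported_le_comap_of_single (F := boundary) (p := chainsOn S n) (fun f hf => ?_) hx
  rw [boundary_single]
  exact Submodule.sum_mem _ fun i _ => Submodule.smul_mem _ _
    (single_mem_chainsOn ((range_comp_subset_range _ f).trans hf))

theorem cone_mem_chainsOn (hv : v ∈ S) {x : OrderedChain V n} (hx : x ∈ chainsOn S n) :
    cone v x ∈ chainsOn S (n + 1) := by
  refine supported_le_comap_of_single (F := cone v) (p := chainsOn S (n + 1))
    (fun f hf => ?_) hx
  rw [cone_single]
  exact single_mem_chainsOn (by rw [Fin.range_cons]; exact insert_subset hv hf)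

open Classical in
noncomputable def freshCone (v : V) : OrderedChain V n →ₗ[ℤ] OrderedChain V (n + 1) :=
  linearCombination ℤ fun f => if v ∈ range f then 0 else single (Fin.cons v f) 1

theorem freshCone_single_of_mem {f : Fin (n + 1) → V} (hv : v ∈ range f) :
    freshCone v (single f 1) = 0 := by
  simp [freshCone, hv]

theorem freshCone_single_of_notMem {f : Fin (n + 1) → V} (hv : v ∉ range f) :
    freshCone v (single f 1) = cone v (single f 1) := by
  simp [freshCone, hv, cone_single]

theorem freshCone_eq_cone (hv : v ∉ S) {x : OrderedChain V n} (hx : x ∈ chainsOn S n) :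
    freshCone v x = cone v x :=
  eq_of_mem_supported_of_single
    (fun _ (hf : range _ ⊆ S) => freshCone_single_of_notMem fun hvf => hv (hf hvf)) hx

theorem boundary_freshCone_single_zero (v : V) (a : Fin 1 → V) :
    boundary (freshCone v (single a 1)) = single a 1 - single (fun _ => v) 1 := by
  by_cases hv : v ∈ range a
  · obtain ⟨i, rfl⟩ := hv
    have ha : (fun _ => a i) = a := funext fun j => by rw [Subsingleton.elim j i]
    rw [freshCone_single_of_mem ⟨i, rfl⟩, map_zero, ha, sub_self]
  · have hv1 : (Fin.cons v a : Fin 2 → V) ∘ (1 : Fin 2).succAbove = fun _ => v := by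
      funext j
      fin_cases j
      rfl
    rw [freshCone_single_of_notMem hv, cone_single, boundary_single, Fin.sum_univ_two,
      Fin.cons_comp_succAbove_zero, hv1]
    simp [sub_eq_add_neg]

section Sorted

variable [LinearOrder V]

def sortedChainsOn (S : Set V) (n : ℕ) : Submodule ℤ (OrderedChain V n) :=
  supported ℤ ℤ {f | StrictMono f ∧ range f ⊆ S}

theorem sortedChainsOn_le_chainsOn (S : Set V) (n : ℕ) : sortedChainsOn S n ≤ chainsOn S n :=
  supported_mono fun _ hf => hf.2

theorem sortedChainsOn_le_supported_injective (S : Set V) (n : ℕ) :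
    sortedChainsOn S n ≤ supported ℤ ℤ {f | Function.Injective f} :=
  supported_mono fun _ hf => hf.1.injective

theorem sortedChainsOn_mono (h : S ⊆ T) (n : ℕ) : sortedChainsOn S n ≤ sortedChainsOn T n :=
  supported_mono fun _ hf => ⟨hf.1, hf.2.trans h⟩

theorem freshCone_mem_sortedChainsOn (hvS : v ∈ S) (hv : S ⊆ Ici v) {x : OrderedChain V n}
    (hx : x ∈ sortedChainsOn S n) : freshCone v x ∈ sortedChainsOn S (n + 1) := by
  refine supported_le_comap_of_single (F := freshCone v) (p := sortedChainsOn S (n + 1))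
    (fun f hf => ?_) hx
  obtain ⟨hmono, hfS⟩ := hf
  by_cases hvf : v ∈ range f
  · rw [freshCone_single_of_mem hvf]
    exact Submodule.zero_mem _
  · rw [freshCone_single_of_notMem hvf, cone_single]
    refine single_mem_supported ℤ 1 ⟨Fin.strictMono_cons.2 ⟨fun j => ?_, hmono⟩, ?_⟩
    · exact (hv (hfS ⟨j, rfl⟩)).lt_of_ne fun h => hvf ⟨j, h.symm⟩
    · rw [Fin.range_cons]
      exact insert_subset hvS hfS

theorem freshCone_head_boundary_single {f : Fin (n + 2) → V} (hf : StrictMono f) :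
    freshCone (f 0) (boundary (single f 1)) = single f 1 := by
  have head_notMem : f 0 ∉ range (f ∘ (0 : Fin (n + 2)).succAbove) := by
    rintro ⟨j, hj⟩
    exact (hf (Fin.succ_pos j)).ne' (by simpa using hj)
  have head_mem (j : Fin (n + 1)) : f 0 ∈ range (f ∘ j.succ.succAbove) := ⟨0, by simp⟩
  rw [boundary_single, map_sum, Fin.sum_univ_succ]
  simp only [map_zsmul, freshCone_single_of_mem (head_mem _), smul_zero, Finset.sum_const_zero,
    add_zero, Fin.val_zero, pow_zero, one_smul, freshCone_single_of_notMem head_notMem,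
    cone_single]
  exact congrArg (single · 1) (Fin.cons_self_tail f)

theorem boundary_freshCone {x : OrderedChain V (n + 1)}
    (hx : x ∈ sortedChainsOn (Ici v) (n + 1)) :
    boundary (freshCone v x) = x - freshCone v (boundary x) := by
  refine eq_of_mem_supported_of_single (F := boundary ∘ₗ freshCone v)
    (G := LinearMap.id - freshCone v ∘ₗ boundary) (fun f hf => ?_) hx
  obtain ⟨hmono, hfv⟩ := hf
  simp only [LinearMap.comp_apply, LinearMap.sub_apply, LinearMap.id_apply]
  by_cases hvf : v ∈ range f
  · obtain ⟨k, hk⟩ := hvf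
    have hv : f 0 = v := le_antisymm (hk ▸ hmono.monotone (Fin.zero_le k)) (hfv ⟨0, rfl⟩)
    rw [freshCone_single_of_mem ⟨k, hk⟩, map_zero, ← hv, freshCone_head_boundary_single hmono,
      sub_self]
  · have hbdy := boundary_mem_chainsOn (single_mem_chainsOn (subset_refl (range f)))
    rw [freshCone_single_of_notMem hvf, boundary_cone_single, freshCone_eq_cone hvf hbdy]

def minVertex (f : Fin (n + 1) → V) : V :=
  Finset.univ.inf' Finset.univ_nonempty f

theorem minVertex_mem (f : Fin (n + 1) → V) : minVertex f ∈ range f := by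
  obtain ⟨i, -, hi⟩ := Finset.exists_mem_eq_inf' Finset.univ_nonempty f
  exact ⟨i, hi.symm⟩

theorem range_subset_Ici_minVertex (f : Fin (n + 1) → V) : range f ⊆ Ici (minVertex f) := by
  rintro _ ⟨i, rfl⟩
  exact Finset.inf'_le f (Finset.mem_univ i)

/-- Sends an injective tuple to its increasing rearrangement, with the sign of the sorting
permutation, and a non-injective one to `0`: coning with the least vertex reinserts it in front
of the already sorted faces that miss it. -/
noncomputable def sortProj : (n : ℕ) → OrderedChain V n →ₗ[ℤ] OrderedChain V n
  | 0 => LinearMap.id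
  | n + 1 => linearCombination ℤ fun f =>
      freshCone (minVertex f) (sortProj n (boundary (single f 1)))

theorem sortProj_zero (x : OrderedChain V 0) : sortProj 0 x = x := rfl

theorem sortProj_succ_single (f : Fin (n + 2) → V) :
    sortProj (n + 1) (single f 1) =
      freshCone (minVertex f) (sortProj n (boundary (single f 1))) := by
  simp [sortProj]

theorem sortProj_mem_sortedChainsOn :
    ∀ {n : ℕ} {S : Set V} {x : OrderedChain V n},
      x ∈ chainsOn S n → sortProj n x ∈ sortedChainsOn S n
  | 0, S, x, hx => (supported_mono fun f hf => ⟨Subsingleton.strictMono (α := Fin 1) f, hf⟩ :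
      chainsOn S 0 ≤ sortedChainsOn S 0) hx
  | n + 1, S, x, hx => by
    refine supported_le_comap_of_single (F := sortProj (n + 1)) (p := sortedChainsOn S (n + 1))
      (fun f (hf : range f ⊆ S) => ?_) hx
    have hπ := sortProj_mem_sortedChainsOn
      (boundary_mem_chainsOn (single_mem_chainsOn (subset_refl (range f))))
    rw [sortProj_succ_single]
    exact sortedChainsOn_mono hf (n + 1)
      (freshCone_mem_sortedChainsOn (minVertex_mem f) (range_subset_Ici_minVertex f) hπ)

theorem boundary_sortProj :
    ∀ (n : ℕ) (x : OrderedChain V (n + 1)),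
      boundary (sortProj (n + 1) x) = sortProj n (boundary x) := by
  intro n
  induction n with
  | zero =>
    suffices boundary ∘ₗ sortProj 1 =
        sortProj 0 ∘ₗ (boundary : OrderedChain V 1 →ₗ[ℤ] _) from
      LinearMap.congr_fun this
    refine lhom_ext' fun f => LinearMap.ext_ring ?_
    simp only [LinearMap.comp_apply, lsingle_apply, sortProj_succ_single, sortProj_zero]
    rw [boundary_single, Fin.sum_univ_two, map_add, map_zsmul, map_zsmul, map_add, map_zsmul,
      map_zsmul, boundary_freshCone_single_zero, boundary_freshCone_single_zero]
    simp [sub_eq_add_neg]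
    abel
  | succ n ih =>
    suffices boundary ∘ₗ sortProj (n + 2) =
        sortProj (n + 1) ∘ₗ (boundary : OrderedChain V (n + 2) →ₗ[ℤ] _) from
      LinearMap.congr_fun this
    refine lhom_ext' fun f => LinearMap.ext_ring ?_
    have hπ := sortProj_mem_sortedChainsOn
      (boundary_mem_chainsOn (single_mem_chainsOn (subset_refl (range f))))
    simp only [LinearMap.comp_apply, lsingle_apply, sortProj_succ_single]
    rw [boundary_freshCone (sortedChainsOn_mono (range_subset_Ici_minVertex f) _ hπ), ih,
      boundary_boundary, map_zero, map_zero, sub_zero]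

noncomputable def homotopy : (n : ℕ) → OrderedChain V n →ₗ[ℤ] OrderedChain V (n + 1)
  | 0 => 0
  | n + 1 => linearCombination ℤ fun f =>
      cone (f 0) (single f 1 - sortProj (n + 1) (single f 1) - homotopy n (boundary (single f 1)))

theorem homotopy_succ_single (f : Fin (n + 2) → V) :
    homotopy (n + 1) (single f 1) =
      cone (f 0)
        (single f 1 - sortProj (n + 1) (single f 1) - homotopy n (boundary (single f 1))) := by
  simp [homotopy]

theorem homotopy_mem_chainsOn :
    ∀ {n : ℕ} {x : OrderedChain V n}, x ∈ chainsOn S n → homotopy n x ∈ chainsOn S (n + 1)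
  | 0, _, _ => Submodule.zero_mem _
  | n + 1, x, hx => by
    refine supported_le_comap_of_single (F := homotopy (n + 1)) (p := chainsOn S (n + 2))
      (fun f (hf : range f ⊆ S) => ?_) hx
    have hfS := single_mem_chainsOn hf
    rw [homotopy_succ_single]
    exact cone_mem_chainsOn (hf ⟨0, rfl⟩) (Submodule.sub_mem _ (Submodule.sub_mem _ hfS
      (sortedChainsOn_le_chainsOn S _ (sortProj_mem_sortedChainsOn hfS)))
      (homotopy_mem_chainsOn (boundary_mem_chainsOn hfS)))

theorem boundary_homotopy_of_isCycle
    (hcycle : ∀ f : Fin (n + 2) → V, boundary (single f 1 - sortProj (n + 1) (single f 1) -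
      homotopy n (boundary (single f 1))) = 0)
    (x : OrderedChain V (n + 1)) :
    boundary (homotopy (n + 1) x) = x - sortProj (n + 1) x - homotopy n (boundary x) := by
  suffices boundary ∘ₗ homotopy (n + 1) = LinearMap.id - sortProj (n + 1) -
      homotopy n ∘ₗ (boundary : OrderedChain V (n + 1) →ₗ[ℤ] _) from
    LinearMap.congr_fun this x
  refine lhom_ext' fun f => LinearMap.ext_ring ?_
  simp only [LinearMap.comp_apply, LinearMap.sub_apply, LinearMap.id_apply, lsingle_apply,
    homotopy_succ_single, boundary_cone, hcycle, map_zero, sub_zero]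

theorem boundary_homotopy :
    ∀ (n : ℕ) (x : OrderedChain V (n + 1)),
      boundary (homotopy (n + 1) x) = x - sortProj (n + 1) x - homotopy n (boundary x)
  | 0 => boundary_homotopy_of_isCycle fun f => by
    rw [map_sub, map_sub, boundary_sortProj, sortProj_zero, sub_self, zero_sub, homotopy,
      LinearMap.zero_apply, map_zero, neg_zero]
  | n + 1 => boundary_homotopy_of_isCycle fun f => by
    rw [map_sub, map_sub, boundary_sortProj, boundary_homotopy n, boundary_boundary, map_zero,
      sub_zero, sub_self]

end Sorted

end OrderedChain

namespace MeanDimPaper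

open OrderedChain

variable {X : Type*} {G : Type*} [AddCommGroup G]

section Nerve

variable {β : Set (Set X)} {A : Set X} {q : ℕ}

theorem IsNerveSimplex.of_range_subset {m n : ℕ} {s : Fin (m + 1) → Set X}
    {t : Fin (n + 1) → Set X} (hs : IsNerveSimplex β s) (hts : range t ⊆ range s) :
    IsNerveSimplex β t ∧ ⋂ i, s i ⊆ ⋂ j, t j := by
  have hmem (j : Fin (n + 1)) : ∃ i, s i = t j := hts ⟨j, rfl⟩
  have hsub : ⋂ i, s i ⊆ ⋂ j, t j := iInter_mono' fun j => (hmem j).imp fun _ h => h.le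
  refine ⟨⟨fun j => ?_, hs.2.mono hsub⟩, hsub⟩
  obtain ⟨i, hi⟩ := hmem j
  exact hi ▸ hs.1 i

open Classical in
noncomputable def cochainEval (c : NerveSimplex β q → G) :
    OrderedChain (Set X) q →ₗ[ℤ] G :=
  linearCombination ℤ fun t => if h : IsNerveSimplex β t then c ⟨t, h⟩ else 0

theorem cochainEval_single (c : NerveSimplex β q → G) (s : NerveSimplex β q) :
    cochainEval c (single s.1 1) = c s := by
  rw [cochainEval, linearCombination_single, one_smul, dif_pos s.2]
  rfl

theorem cochainEval_single_of_not (c : NerveSimplex β q → G) {t : Fin (q + 1) → Set X}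
    (ht : ¬ IsNerveSimplex β t) : cochainEval c (single t 1) = 0 := by
  simp [cochainEval, ht]

theorem cob_comp_single (F : OrderedChain (Set X) q →ₗ[ℤ] G) (g : NerveSimplex β (q + 1)) :
    cob (fun σ => F (single σ.1 1)) g = F (boundary (single g.1 1)) := by
  simp only [cob, face, boundary_single, map_sum, map_zsmul]

theorem cochainEval_boundary_single (c : NerveSimplex β q → G) (g : NerveSimplex β (q + 1)) :
    cochainEval c (boundary (single g.1 1)) = cob c g := by
  rw [← cob_comp_single]
  simp only [cochainEval_single]

theorem cochainEval_boundary_eq_zero {n : ℕ} {c : NerveSimplex β q → G}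
    (hc : ∀ g, cob c g = 0)
    {s : Fin (n + 1) → Set X} (hs : IsNerveSimplex β s) {x : OrderedChain (Set X) (q + 1)}
    (hx : x ∈ chainsOn (range s) (q + 1)) : cochainEval c (boundary x) = 0 :=
  eq_of_mem_supported_of_single (F := cochainEval c ∘ₗ boundary) (G := 0)
    (fun t (ht : range t ⊆ range s) =>
      (cochainEval_boundary_single c ⟨t, (hs.of_range_subset ht).1⟩).trans (hc _)) hx

theorem cochainEval_eq_zero_of_isRelCochain {n : ℕ} {c : NerveSimplex β q → G}
    (hc : IsRelCochain A c) {s : Fin (n + 1) → Set X} (hs : IsNerveSimplex β s)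
    (hsA : ((⋂ i, s i) ∩ A).Nonempty) {x : OrderedChain (Set X) q}
    (hx : x ∈ chainsOn (range s) q) : cochainEval c x = 0 :=
  eq_of_mem_supported_of_single (F := cochainEval c) (G := 0)
    (fun t (ht : range t ⊆ range s) => by
      obtain ⟨htβ, hst⟩ := hs.of_range_subset ht
      exact (cochainEval_single c ⟨t, htβ⟩).trans
        (hc ⟨t, htβ⟩ (hsA.mono (inter_subset_inter_left A hst)))) hx

theorem cochainEval_eq_zero_of_injective (c : NerveSimplex β q → G)
    (hβ : ∀ t : Fin (q + 1) → Set X, IsNerveSimplex β t → ¬ Function.Injective t)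
    {x : OrderedChain (Set X) q} (hx : x ∈ supported ℤ ℤ {t | Function.Injective t}) :
    cochainEval c x = 0 :=
  eq_of_mem_supported_of_single (F := cochainEval c) (G := 0)
    (fun _ ht => cochainEval_single_of_not c fun htβ => hβ _ htβ ht) hx

theorem IsRelCocycle.isRelCoboundary_of_forall_not_injective {c : NerveSimplex β (q + 1) → G}
    (hc : IsRelCocycle A c)
    (hβ : ∀ t : Fin (q + 2) → Set X, IsNerveSimplex β t → ¬ Function.Injective t) :
    IsRelCoboundary A (q + 1) c := by
  let _ : LinearOrder (Set X) := IsWellOrder.linearOrder WellOrderingRel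
  refine ⟨fun σ => (cochainEval c ∘ₗ homotopy q) (single σ.1 1), fun σ hσ => ?_,
    fun g => ?_⟩
  · exact cochainEval_eq_zero_of_isRelCochain hc.1 σ.2 hσ
      (homotopy_mem_chainsOn (single_mem_chainsOn subset_rfl))
  · have hg := single_mem_chainsOn (subset_refl (range g.1))
    calc cob (fun σ => (cochainEval c ∘ₗ homotopy q) (single σ.1 1)) g
        = cochainEval c (homotopy q (boundary (single g.1 1))) := cob_comp_single _ g
      _ = cochainEval c (single g.1 1 - sortProj (q + 1) (single g.1 1) -
            boundary (homotopy (q + 1) (single g.1 1))) := by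
          rw [boundary_homotopy, sub_sub_cancel]
      _ = c g := by
          rw [map_sub, map_sub, cochainEval_single,
            cochainEval_eq_zero_of_injective c hβ (sortedChainsOn_le_supported_injective _ _
              (sortProj_mem_sortedChainsOn hg)),
            cochainEval_boundary_eq_zero hc.2 g.2 (homotopy_mem_chainsOn hg), sub_zero, sub_zero]

theorem IsRelCocycle.comp_simplexMap {α : Set (Set X)} {c : NerveSimplex α q → G}
    (hc : IsRelCocycle A c) (r : Set X → Set X) (hr : ∀ V ∈ β, V ⊆ r V ∧ r V ∈ α) :
    IsRelCocycle A fun g : NerveSimplex β q => c (simplexMap r hr g) := by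
  refine ⟨fun f ⟨x, hx, hxA⟩ => hc.1 _ ⟨x, ?_, hxA⟩, fun g => hc.2 (simplexMap r hr g)⟩
  exact mem_iInter.2 fun i => (hr _ (f.2.1 i)).1 (mem_iInter.1 hx i)

end Nerve

section Dimension

variable {α : Set (Set X)}

theorem le_ord {n : ℕ} (h : ∃ f : Fin (n + 1) → Set X,
    Function.Injective f ∧ (∀ i, f i ∈ α) ∧ (⋂ i, f i).Nonempty) :
    (n : ℕ∞) ≤ ord α :=
  le_iSup₂ (f := fun (n : ℕ) _ => (n : ℕ∞)) n h

theorem Refines.exists_map {β : Set (Set X)} (h : Refines β α) :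
    ∃ r : Set X → Set X, ∀ V ∈ β, V ⊆ r V ∧ r V ∈ α := by
  choose! r hr using h
  exact ⟨r, fun V hV => (hr V hV).symm⟩

variable [TopologicalSpace X]

theorem covD_le_topDim (hα : IsOpenCover α) : covD α ≤ topDim X :=
  le_iSup₂ (f := fun α _ => covD α) α hα

theorem NerveToCechNonzero.le_covD {A : Set X} {q : ℕ}
    (h : NerveToCechNonzero α A G q) : (q : ℕ∞) ≤ covD α := by
  obtain _ | q := q
  · exact zero_le
  obtain ⟨c, hc, hnot⟩ := h
  refine le_iInf₂ fun β ⟨hβ, hβα⟩ => ?_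
  obtain ⟨r, hr⟩ := hβα.exists_map
  by_contra hlt
  exact hnot β hβ hβα r hr ((hc.comp_simplexMap r hr).isRelCoboundary_of_forall_not_injective
    fun t ht hinj => hlt (le_ord ⟨t, hinj, ht⟩))

end Dimension

theorem cohomDim_le_topDim_general {K : Type*} [MetricSpace K]
    (G : Type*) [AddCommGroup G] :
    cohomDim G K ≤ topDim K :=
  iSup₂_le fun _ ⟨_, _, _, hα, hnz⟩ => hnz.le_covD.trans (covD_le_topDim hα)

/-- for every compact metric space `K` and every Abelian group `G`,
`dim_G K ≤ dim K`. -/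
theorem cohomDim_le_topDim {K : Type*} [MetricSpace K] [CompactSpace K]
    (G : Type*) [AddCommGroup G] :
    cohomDim G K ≤ topDim K :=
  cohomDim_le_topDim_general G

end MeanDimPaper
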